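/- arXiv:2001.06835 — 4 statements merged into one kernel-verified Lean document; each statement's English description precedes it below -/
import Mathlib

section
/- Let κ > 0 and let φ, ψ : ℝ⁵ → ℝ be real-valued Schwartz functions, not both identically zero, satisfying the elliptic system φ − Δφ = φψ and 2ψ − κΔψ = φ² on ℝ⁵. Then H_κ(φ,ψ) = 5·M(φ,ψ) and R(φ,ψ) = 4·M(φ,ψ); that is, M(φ,ψ) : H_κ(φ,ψ) : R(φ,ψ) = 1 : 5 : 4. -/
open MeasureTheory

noncomputable section

abbrev E5 := EuclideanSpace ℝ (Fin 5)

/-- Spatial partial derivative of a real-valued `f` at `x` in direction `i`. -/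
def pdR (f : E5 → ℝ) (x : E5) (i : Fin 5) : ℝ :=
  fderiv ℝ f x (EuclideanSpace.single i 1)

/-- Laplacian of a real-valued function on `ℝ⁵`. -/
def lapR (f : E5 → ℝ) (x : E5) : ℝ :=
  ∑ i : Fin 5, fderiv ℝ (fun y => pdR f y i) x (EuclideanSpace.single i 1)

/-! Testing the two equations against `φ` and `ψ` and integrating by parts gives the Nehari-type
identities `‖φ‖² + ‖∇φ‖² = R` and `2‖ψ‖² + κ‖∇ψ‖² = R`. Testing them instead against the generators
`x·∇φ` and `½ x·∇ψ` of dilations gives a Pohozaev identity: on `ℝⁿ` one has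
`∫ (x·∇f) f = -(n/2)‖f‖²` and `∫ (x·∇f) Δf = ((n-2)/2)‖∇f‖²`, while the two nonlinear terms
combine into `½ ∫ x·∇(φ²ψ) = -(n/2) R`. For `n = 5` these three linear relations between
`M`, `H` and `R` force `H = 5M` and `R = 4M`. -/

open SchwartzMap LineDeriv Laplacian

namespace Pohozaev

section Euler

variable {E F : Type*} [NormedAddCommGroup E] [NormedSpace ℝ E]
  [NormedAddCommGroup F] [NormedSpace ℝ F]

def euler : 𝓢(E, F) →L[ℝ] 𝓢(E, F) :=
  bilinLeftCLM (ContinuousLinearMap.id ℝ (E →L[ℝ] F)) Function.HasTemperateGrowth.id' ∘L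
    fderivCLM ℝ E F

theorem euler_apply (f : 𝓢(E, F)) (x : E) : euler f x = fderiv ℝ f x x := rfl

theorem lineDerivOp_euler (v : E) (f : 𝓢(E, F)) :
    ∂_{v} (euler f) = ∂_{v} f + euler (∂_{v} f) := by
  ext x
  have hdf : Differentiable ℝ (fderiv ℝ f) :=
    ((f.smooth 2).fderiv_right (m := 1) (by norm_num)).differentiable one_ne_zero
  have hsymm : IsSymmSndFDerivAt ℝ f x := (f.smooth 2).contDiffAt.isSymmSndFDerivAt (by simp)
  have hderiv : ⇑(∂_{v} f : 𝓢(E, F)) = fun y => fderiv ℝ f y v := rfl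
  rw [add_apply, lineDerivOp_apply_eq_fderiv, euler_apply, hderiv,
    show ⇑(euler f) = fun y => fderiv ℝ f y (id y) from rfl,
    fderiv_clm_apply (hdf x) differentiableAt_id,
    fderiv_clm_apply (hdf x) (differentiableAt_const v)]
  simp [hsymm v x]

variable [FiniteDimensional ℝ E] [MeasurableSpace E] [BorelSpace E] {μ : Measure E}
  [μ.IsAddHaarMeasure]

theorem integrable_smul {g : E → ℝ} (hg : g.HasTemperateGrowth) (h : 𝓢(E, F)) :
    Integrable (fun x => g x • h x) μ := by
  simpa [smulLeftCLM_apply hg] using (smulLeftCLM F g h).integrable (μ := μ)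

theorem integral_euler (h : 𝓢(E, F)) :
    ∫ x, euler h x ∂μ = -(Module.finrank ℝ E : ℝ) • ∫ x, h x ∂μ := by
  let b := Module.finBasis ℝ E
  let c : Fin (Module.finrank ℝ E) → E →L[ℝ] ℝ :=
    fun i => LinearMap.toContinuousLinearMap (b.coord i)
  have hexpand : ∀ x, euler h x = ∑ i, c i x • ∂_{b i} h x := by
    intro x
    rw [euler_apply]
    nth_rewrite 2 [← b.sum_repr x]
    simp only [map_sum, map_smul, c, lineDerivOp_apply_eq_fderiv,
      LinearMap.coe_toContinuousLinearMap', Module.Basis.coord_apply]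
  -- each coordinate `c i` has derivative `1` in the direction `b i`
  have hcoord : ∀ i, ∫ x, c i x • ∂_{b i} h x ∂μ = -∫ x, h x ∂μ := by
    intro i
    have hibp := integral_bilinear_hasLineDerivAt_right_eq_neg_left_of_integrable (μ := μ)
      (B := ContinuousLinearMap.lsmul ℝ ℝ) (f := c i) (f' := fun _ => 1) (g := h)
      (g' := fun x => (∂_{b i} h : 𝓢(E, F)) x) (v := b i)
      (by simpa using h.integrable)
      (integrable_smul (c i).hasTemperateGrowth _) (integrable_smul (c i).hasTemperateGrowth h)
      (fun x _ => by simpa [c] using ((c i).hasFDerivAt (x := x)).hasLineDerivAt (b i))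
      (fun x _ => (h.hasFDerivAt x).hasLineDerivAt (b i))
    simpa using hibp
  rw [integral_congr_ae (Filter.Eventually.of_forall hexpand),
    integral_finsetSum _ fun i _ => integrable_smul (c i).hasTemperateGrowth _]
  simp [hcoord, Nat.cast_smul_eq_nsmul]

end Euler

section Real

variable {E : Type*} [NormedAddCommGroup E] [NormedSpace ℝ E]

theorem euler_mul_apply (f g : 𝓢(E, ℝ)) (x : E) :
    euler (pairing (ContinuousLinearMap.mul ℝ ℝ) f g) x = euler f x * g x + f x * euler g x := by
  rw [euler_apply, show ⇑(pairing (ContinuousLinearMap.mul ℝ ℝ) f g) = fun y => f y * g y from rfl,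
    fderiv_fun_mul f.differentiableAt g.differentiableAt]
  simp only [add_apply, smul_apply, smul_eq_mul, euler_apply]
  ring

variable [FiniteDimensional ℝ E] [MeasurableSpace E] [BorelSpace E] {μ : Measure E}
  [μ.IsAddHaarMeasure]

theorem integrable_mul (f g : 𝓢(E, ℝ)) : Integrable (fun x => f x * g x) μ :=
  (pairing (ContinuousLinearMap.mul ℝ ℝ) f g).integrable

theorem integrable_sq (f : 𝓢(E, ℝ)) : Integrable (fun x => f x ^ 2) μ := by
  simpa only [pow_two] using integrable_mul f f

theorem integral_euler_mul_add_mul_euler (f g : 𝓢(E, ℝ)) :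
    ∫ x, euler f x * g x ∂μ + ∫ x, f x * euler g x ∂μ
      = -(Module.finrank ℝ E : ℝ) * ∫ x, f x * g x ∂μ := by
  rw [← integral_add (integrable_mul _ _) (integrable_mul _ _)]
  simpa [← euler_mul_apply] using
    integral_euler (μ := μ) (pairing (ContinuousLinearMap.mul ℝ ℝ) f g)

theorem integral_euler_mul_self (f : 𝓢(E, ℝ)) :
    ∫ x, euler f x * f x ∂μ = -(Module.finrank ℝ E / 2 : ℝ) * ∫ x, f x ^ 2 ∂μ := by
  have h := integral_euler_mul_add_mul_euler (μ := μ) f f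
  simp only [mul_comm (f _) (euler f _), ← pow_two] at h
  linarith

theorem integral_euler_mul_mul_add_half (f g : 𝓢(E, ℝ)) :
    ∫ x, euler f x * (f x * g x) ∂μ + (1 / 2) * ∫ x, euler g x * f x ^ 2 ∂μ
      = -(Module.finrank ℝ E / 2 : ℝ) * ∫ x, g x * f x ^ 2 ∂μ := by
  have h := integral_euler_mul_add_mul_euler (μ := μ)
    (pairing (ContinuousLinearMap.mul ℝ ℝ) f f) g
  simp only [euler_mul_apply, pairing_apply_apply, ContinuousLinearMap.mul_apply'] at h
  have h₁ : ∫ x, (euler f x * f x + f x * euler f x) * g x ∂μ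
      = 2 * ∫ x, euler f x * (f x * g x) ∂μ := by
    rw [← integral_const_mul]; congr 1 with x; ring
  have h₂ : ∫ x, f x * f x * euler g x ∂μ = ∫ x, euler g x * f x ^ 2 ∂μ := by
    congr 1 with x; ring
  have h₃ : ∫ x, f x * f x * g x ∂μ = ∫ x, g x * f x ^ 2 ∂μ := by
    congr 1 with x; ring
  rw [h₁, h₂, h₃] at h
  linear_combination h / 2

end Real

section Laplacian

variable {ι E : Type*} [NormedAddCommGroup E] [InnerProductSpace ℝ E]
  [FiniteDimensional ℝ E] [MeasurableSpace E] [BorelSpace E] {μ : Measure E}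
  [μ.IsAddHaarMeasure] {f : 𝓢(E, ℝ)} {c d : ℝ} {N : E → ℝ}

theorem integral_mul_eq_of_sub_laplacian_eq (h : ∀ x, c * f x - d * Δ f x = N x)
    (g : 𝓢(E, ℝ)) :
    ∫ x, g x * N x ∂μ = c * ∫ x, g x * f x ∂μ - d * ∫ x, g x * Δ f x ∂μ := by
  simp_rw [← h, mul_sub, mul_left_comm (g _)]
  rw [integral_sub ((integrable_mul _ _).const_mul _) ((integrable_mul _ _).const_mul _),
    integral_const_mul, integral_const_mul]

variable [Fintype ι] (b : OrthonormalBasis ι ℝ E)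

theorem integral_mul_laplacian (f g : 𝓢(E, ℝ)) :
    ∫ x, g x * Δ f x ∂μ = -∑ i, ∫ x, ∂_{b i} g x * ∂_{b i} f x ∂μ := by
  simp_rw [laplacian_eq_sum b, sum_apply, Finset.mul_sum]
  rw [integral_finsetSum _ fun i _ => integrable_mul _ _, ← Finset.sum_neg_distrib]
  exact Finset.sum_congr rfl fun i _ => integral_mul_lineDerivOp_right_eq_neg_left _ _ _

theorem integral_euler_mul_laplacian (f : 𝓢(E, ℝ)) :
    ∫ x, euler f x * Δ f x ∂μ
      = ((Module.finrank ℝ E - 2) / 2 : ℝ) * ∑ i, ∫ x, ∂_{b i} f x ^ 2 ∂μ := by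
  rw [integral_mul_laplacian b, Finset.mul_sum, ← Finset.sum_neg_distrib]
  refine Finset.sum_congr rfl fun i _ => ?_
  simp only [lineDerivOp_euler, add_apply, add_mul]
  rw [integral_add (integrable_mul _ _) (integrable_mul _ _), integral_euler_mul_self]
  simp only [← pow_two]
  ring

theorem integral_self_mul_eq_of_sub_laplacian_eq (h : ∀ x, c * f x - d * Δ f x = N x) :
    ∫ x, f x * N x ∂μ = c * ∫ x, f x ^ 2 ∂μ + d * ∑ i, ∫ x, ∂_{b i} f x ^ 2 ∂μ := by
  simp only [integral_mul_eq_of_sub_laplacian_eq h, integral_mul_laplacian b, pow_two]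
  ring

theorem integral_euler_mul_eq_of_sub_laplacian_eq (h : ∀ x, c * f x - d * Δ f x = N x) :
    ∫ x, euler f x * N x ∂μ
      = -(Module.finrank ℝ E / 2 : ℝ) * c * ∫ x, f x ^ 2 ∂μ
        - ((Module.finrank ℝ E - 2) / 2 : ℝ) * d * ∑ i, ∫ x, ∂_{b i} f x ^ 2 ∂μ := by
  rw [integral_mul_eq_of_sub_laplacian_eq h, integral_euler_mul_self,
    integral_euler_mul_laplacian b]
  ring

end Laplacian

theorem pdR_eq_lineDerivOp (f : 𝓢(E5, ℝ)) (x : E5) (i : Fin 5) :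
    pdR f x i = ∂_{EuclideanSpace.basisFun (Fin 5) ℝ i} f x := by
  rw [EuclideanSpace.basisFun_apply]
  rfl

theorem lapR_eq_laplacian (f : 𝓢(E5, ℝ)) (x : E5) : lapR f x = Δ f x := by
  rw [laplacian_eq_sum (EuclideanSpace.basisFun (Fin 5) ℝ), sum_apply]
  simp only [EuclideanSpace.basisFun_apply]
  rfl

theorem integral_sum_pdR_sq (f : 𝓢(E5, ℝ)) :
    ∫ x, ∑ i, pdR f x i ^ 2 = ∑ i, ∫ x, ∂_{EuclideanSpace.basisFun (Fin 5) ℝ i} f x ^ 2 := by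
  simp_rw [pdR_eq_lineDerivOp]
  exact integral_finsetSum _ fun i _ => integrable_sq _

end Pohozaev

open Pohozaev

theorem pohozaev_ratios_general (κ : ℝ) (φ ψ : SchwartzMap E5 ℝ)
    (heq1 : ∀ x : E5, φ x - lapR φ x = φ x * ψ x)
    (heq2 : ∀ x : E5, 2 * ψ x - κ * lapR ψ x = (φ x) ^ 2) :
    ((∫ x : E5, ∑ i : Fin 5, (pdR φ x i) ^ 2)
        + (κ / 2) * ∫ x : E5, ∑ i : Fin 5, (pdR ψ x i) ^ 2)
      = 5 * ∫ x : E5, ((φ x) ^ 2 + (ψ x) ^ 2) ∧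
    (∫ x : E5, ψ x * (φ x) ^ 2) = 4 * ∫ x : E5, ((φ x) ^ 2 + (ψ x) ^ 2) := by
  have hφ : ∀ x, 1 * φ x - 1 * Δ φ x = φ x * ψ x := by simpa [lapR_eq_laplacian] using heq1
  have hψ : ∀ x, 2 * ψ x - κ * Δ ψ x = φ x ^ 2 := by simpa [lapR_eq_laplacian] using heq2
  have hdim : (Module.finrank ℝ E5 : ℝ) = 5 := by simp
  have nehariφ := integral_self_mul_eq_of_sub_laplacian_eq (μ := volume)
    (EuclideanSpace.basisFun (Fin 5) ℝ) hφ
  have nehariψ := integral_self_mul_eq_of_sub_laplacian_eq (μ := volume)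
    (EuclideanSpace.basisFun (Fin 5) ℝ) hψ
  have pohozaevφ := integral_euler_mul_eq_of_sub_laplacian_eq (μ := volume)
    (EuclideanSpace.basisFun (Fin 5) ℝ) hφ
  have pohozaevψ := integral_euler_mul_eq_of_sub_laplacian_eq (μ := volume)
    (EuclideanSpace.basisFun (Fin 5) ℝ) hψ
  have cubic := integral_euler_mul_mul_add_half (μ := volume) φ ψ
  have hR : ∫ x, φ x * (φ x * ψ x) = ∫ x, ψ x * φ x ^ 2 := by congr 1 with x; ring
  rw [hdim] at pohozaevφ pohozaevψ cubic
  rw [integral_sum_pdR_sq, integral_sum_pdR_sq, integral_add (integrable_sq φ) (integrable_sq ψ)]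
  constructor
  · linear_combination -10 * (nehariφ - hR) - 5 * nehariψ
      + 6 * (cubic - pohozaevφ - pohozaevψ / 2)
  · linear_combination -6 * (nehariφ - hR) - 3 * nehariψ
      + 4 * (cubic - pohozaevφ - pohozaevψ / 2)

/-- Pohozaev-type relations `M : H : R = 1 : 5 : 4` for ground states of the
quadratic Schrödinger system on `ℝ⁵`. -/
theorem pohozaev_ratios (κ : ℝ) (hκ : 0 < κ) (φ ψ : SchwartzMap E5 ℝ)
    (hne : ¬ (∀ x : E5, φ x = 0 ∧ ψ x = 0))
    (heq1 : ∀ x : E5, φ x - lapR φ x = φ x * ψ x)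
    (heq2 : ∀ x : E5, 2 * ψ x - κ * lapR ψ x = (φ x) ^ 2) :
    ((∫ x : E5, ∑ i : Fin 5, (pdR φ x i) ^ 2)
        + (κ / 2) * ∫ x : E5, ∑ i : Fin 5, (pdR ψ x i) ^ 2)
      = 5 * ∫ x : E5, ((φ x) ^ 2 + (ψ x) ^ 2) ∧
    (∫ x : E5, ψ x * (φ x) ^ 2) = 4 * ∫ x : E5, ((φ x) ^ 2 + (ψ x) ^ 2) :=
  pohozaev_ratios_general κ φ ψ heq1 heq2
end
end

section
/- Let κ > 0, ξ ∈ ℝ⁵, let u, v : ℝ⁵ → ℂ be Schwartz functions, and let w : ℝ⁵ → ℝ be a bounded continuous compactly supported function. Define u^ξ(x) = e^{iκ⟨x,ξ⟩}u(x), v^ξ(x) = e^{i⟨x,ξ⟩}v(x), and for a pair (a,b) set L(a,b)(x) = 2|∇a(x)|² + κ|∇b(x)|², N(a,b)(y) = 2κ|a(y)|² + |b(y)|², A(a,b)(x) = Im(2·conj(a(x))∇a(x) + conj(b(x))∇b(x)) ∈ ℝ⁵, and B(a,b)(y) = Im(2κ·conj(a(y))∇a(y) + κ·conj(b(y))∇b(y))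 ∈ ℝ⁵. Then ∬_{ℝ⁵×ℝ⁵} [ L(u^ξ,v^ξ)(x)·N(u^ξ,v^ξ)(y) − A(u^ξ,v^ξ)(x)·B(u^ξ,v^ξ)(y) ] w(x)w(y) dx dy = ∬_{ℝ⁵×ℝ⁵} [ L(u,v)(x)·N(u,v)(y) − A(u,v)(x)·B(u,v)(y) ] w(x)w(y) dx dy; that is, the symmetrized Morawetz integrand is invariant under the Galilean transformation. -/
/-!
Multiplying by the phase `e^{i c⟨x,ξ⟩}` shifts `∇a` to `e^{i c⟨x,ξ⟩}(∇a + i c ξ a)`; with `c = κ`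
for `u` and `c = 1` for `v` this leaves `N` unchanged, adds `ξ N` to `A` (and `κ ξ N` to `B = κ A`),
and adds `2κ ξ·A + κ|ξ|² N` to `L`. Substituting, the Morawetz integrand changes by
`κ (ξ·A(x) N(y) - ξ·A(y) N(x))`, which is antisymmetric in `(x, y)`; against the symmetric
weight `w(x) w(y)` its double integral vanishes by Fubini.
-/

open MeasureTheory Complex ComplexConjugate

noncomputable section

/-- Spatial partial derivative of `f` at `x` in coordinate direction `i`. -/
def pd (f : E5 → ℂ) (x : E5) (i : Fin 5) : ℂ :=
  fderiv ℝ f x (EuclideanSpace.single i 1)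

/-- Galilean phase factor `y ↦ e^{i c ⟨y,ξ⟩} f y`. -/
def gal (c : ℝ) (ξ : E5) (f : E5 → ℂ) : E5 → ℂ :=
  fun y => Complex.exp (I * ((c * ∑ i : Fin 5, y i * ξ i : ℝ) : ℂ)) * f y

/-- Kinetic density `L(a,b)(x) = 2|∇a(x)|² + κ|∇b(x)|²`. -/
def Lden (κ : ℝ) (a b : E5 → ℂ) (x : E5) : ℝ :=
  2 * (∑ i : Fin 5, ‖pd a x i‖ ^ 2) + κ * (∑ i : Fin 5, ‖pd b x i‖ ^ 2)

/-- Mass density `N(a,b)(y) = 2κ|a(y)|² + |b(y)|²`. -/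
def Nden (κ : ℝ) (a b : E5 → ℂ) (y : E5) : ℝ :=
  2 * κ * ‖a y‖ ^ 2 + ‖b y‖ ^ 2

/-- Momentum density `A(a,b)(x) = Im(2 conj(a)∇a + conj(b)∇b)(x)`, componentwise. -/
def Aden (a b : E5 → ℂ) (x : E5) (i : Fin 5) : ℝ :=
  (2 * conj (a x) * pd a x i + conj (b x) * pd b x i).im

/-- Weighted momentum density `B(a,b)(y) = Im(2κ conj(a)∇a + κ conj(b)∇b)(y)`. -/
def Bden (κ : ℝ) (a b : E5 → ℂ) (y : E5) (i : Fin 5) : ℝ :=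
  (2 * (κ : ℂ) * conj (a y) * pd a y i + (κ : ℂ) * conj (b y) * pd b y i).im

open Function

theorem integral_integral_eq_zero_of_antisymm {α E : Type*} [MeasurableSpace α]
    [NormedAddCommGroup E] [NormedSpace ℝ E] {μ : Measure α} [SFinite μ] {f : α → α → E}
    (hf : Integrable (uncurry f) (μ.prod μ)) (hanti : ∀ x y, f y x = -f x y) :
    ∫ x, ∫ y, f x y ∂μ ∂μ = 0 := by
  have : IsAddTorsionFree E := .of_isTorsionFree ℝ E
  refine self_eq_neg.mp ?_
  calc ∫ x, ∫ y, f x y ∂μ ∂μ = ∫ y, ∫ x, f x y ∂μ ∂μ := integral_integral_swap hf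
    _ = ∫ y, ∫ x, -f y x ∂μ ∂μ := by congr 1; ext y; congr 1; ext x; exact hanti y x
    _ = -∫ y, ∫ x, f y x ∂μ ∂μ := by simp only [integral_neg]

theorem HasCompactSupport.mul_fst_snd {X : Type*} [TopologicalSpace X] {w : X → ℝ}
    (hwc : HasCompactSupport w) : HasCompactSupport fun p : X × X => w p.1 * w p.2 := by
  refine .intro' (hwc.prod hwc) ((isClosed_tsupport w).prod (isClosed_tsupport w)) fun p hp => ?_
  rcases not_and_or.mp hp with h | h
  · rw [image_eq_zero_of_notMem_tsupport h, zero_mul]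
  · rw [image_eq_zero_of_notMem_tsupport h, mul_zero]

theorem Continuous.integrable_mul_fst_mul_snd {X : Type*} [TopologicalSpace X]
    [MeasurableSpace X] [OpensMeasurableSpace (X × X)] {μ : Measure X}
    [IsFiniteMeasureOnCompacts μ] {F : X × X → ℝ} {w : X → ℝ} (hF : Continuous F)
    (hw : Continuous w) (hwc : HasCompactSupport w) :
    Integrable (fun p : X × X => F p * w p.1 * w p.2) (μ.prod μ) := by
  simp_rw [mul_assoc]
  exact (hF.mul (by fun_prop)).integrable_of_hasCompactSupport hwc.mul_fst_snd.mul_left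

theorem Complex.im_conj_mul_mul_add_I_mul {e : ℂ} (he : ‖e‖ = 1) (a b : ℂ) (t : ℝ) :
    (conj (e * a) * (e * (b + I * t * a))).im = (conj a * b).im + t * ‖a‖ ^ 2 := by
  have hee : conj e * e = 1 := by rw [Complex.conj_mul', he]; norm_num
  rw [show conj (e * a) * (e * (b + I * t * a)) = conj e * e * (conj a * b + I * t * (conj a * a))
    by rw [map_mul]; ring, hee, one_mul, Complex.conj_mul']
  simp [Complex.mul_im, ← Complex.ofReal_pow]

theorem Complex.norm_mul_add_I_mul_sq {e : ℂ} (he : ‖e‖ = 1) (a b : ℂ) (t : ℝ) :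
    ‖e * (b + I * t * a)‖ ^ 2 = ‖b‖ ^ 2 + 2 * t * (conj a * b).im + t ^ 2 * ‖a‖ ^ 2 := by
  rw [norm_mul, he, one_mul]
  simp only [Complex.sq_norm, Complex.normSq_apply, Complex.add_re, Complex.add_im,
    Complex.mul_re, Complex.mul_im, Complex.I_re, Complex.I_im, Complex.ofReal_re,
    Complex.ofReal_im, Complex.conj_re, Complex.conj_im]
  ring

theorem pd_gal {f : E5 → ℂ} (hf : Differentiable ℝ f) (c : ℝ) (ξ x : E5) (i : Fin 5) :
    pd (gal c ξ f) x i =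
      exp (I * ((c * ∑ j, x j * ξ j : ℝ) : ℂ)) * (pd f x i + I * ((c * ξ i : ℝ) : ℂ) * f x) := by
  let phase : E5 →L[ℝ] ℂ := (c • innerSL ℝ ξ).smulRight I
  have hphase (y : E5) : phase y = I * ((c * ∑ j, y j * ξ j : ℝ) : ℂ) := by
    simp [phase, PiLp.inner_apply, mul_comm]
  have hderiv : HasFDerivAt (gal c ξ f)
      (exp (phase x) • fderiv ℝ f x + f x • exp (phase x) • phase) x := by
    have hgal : gal c ξ f = (fun y => exp (phase y)) * f := by
      funext y
      simp only [gal, Pi.mul_apply, hphase]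
    rw [hgal]
    exact phase.hasFDerivAt.cexp.mul (hf x).hasFDerivAt
  unfold pd
  rw [hderiv.fderiv, ← hphase]
  simp only [add_apply, smul_apply, smul_eq_mul]
  rw [hphase (EuclideanSpace.single i 1)]
  simp only [PiLp.single_apply, ite_mul, one_mul, zero_mul, Finset.sum_ite_eq', Finset.mem_univ,
    ↓reduceIte, ofReal_mul]
  ring

section Densities

variable (κ : ℝ) (ξ : E5) {u v : E5 → ℂ}

theorem Nden_gal (x : E5) : Nden κ (gal κ ξ u) (gal 1 ξ v) x = Nden κ u v x := by
  simp only [Nden, gal, norm_mul, norm_exp_I_mul_ofReal, one_mul]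

theorem Aden_eq (x : E5) (i : Fin 5) :
    Aden u v x i = 2 * (conj (u x) * pd u x i).im + (conj (v x) * pd v x i).im := by
  simp [Aden, mul_assoc, Complex.mul_im]

theorem Bden_eq_mul_Aden (x : E5) (i : Fin 5) : Bden κ u v x i = κ * Aden u v x i := by
  rw [Bden, Aden, ← Complex.im_ofReal_mul]
  ring_nf

theorem Aden_gal (hu : Differentiable ℝ u) (hv : Differentiable ℝ v) (x : E5)
    (i : Fin 5) :
    Aden (gal κ ξ u) (gal 1 ξ v) x i = Aden u v x i + ξ i * Nden κ u v x := by
  rw [Aden_eq, pd_gal hu, pd_gal hv, gal, gal,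
    Complex.im_conj_mul_mul_add_I_mul (norm_exp_I_mul_ofReal _),
    Complex.im_conj_mul_mul_add_I_mul (norm_exp_I_mul_ofReal _), Aden_eq, Nden]
  ring

theorem Lden_gal (hu : Differentiable ℝ u) (hv : Differentiable ℝ v) (x : E5) :
    Lden κ (gal κ ξ u) (gal 1 ξ v) x
      = Lden κ u v x + 2 * κ * ∑ i, ξ i * Aden u v x i + κ * (∑ i, ξ i ^ 2) * Nden κ u v x := by
  simp only [Lden, Nden, Aden_eq, pd_gal hu, pd_gal hv,
    Complex.norm_mul_add_I_mul_sq (norm_exp_I_mul_ofReal _), Fin.sum_univ_five]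
  ring

end Densities

def morawetzDensity (κ : ℝ) (a b : E5 → ℂ) (x y : E5) : ℝ :=
  Lden κ a b x * Nden κ a b y - ∑ i, Aden a b x i * Bden κ a b y i

theorem morawetzDensity_gal (κ : ℝ) (ξ : E5) {u v : E5 → ℂ} (hu : Differentiable ℝ u)
    (hv : Differentiable ℝ v) (x y : E5) :
    morawetzDensity κ (gal κ ξ u) (gal 1 ξ v) x y
      = morawetzDensity κ u v x y + κ * ((∑ i, ξ i * Aden u v x i) * Nden κ u v y
          - (∑ i, ξ i * Aden u v y i) * Nden κ u v x) := by
  simp only [morawetzDensity, Bden_eq_mul_Aden, Lden_gal κ ξ hu hv, Nden_gal,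
    Aden_gal κ ξ hu hv, Fin.sum_univ_five]
  ring

theorem continuous_pd {f : E5 → ℂ} (hf : ContDiff ℝ 1 f) (i : Fin 5) :
    Continuous fun x => pd f x i :=
  (hf.continuous_fderiv one_ne_zero).clm_apply continuous_const

section Continuity

variable (κ : ℝ) {u v : E5 → ℂ}

theorem continuous_Nden (hu : Continuous u) (hv : Continuous v) :
    Continuous (Nden κ u v) := by
  unfold Nden; fun_prop

theorem continuous_Lden (hu : ContDiff ℝ 1 u) (hv : ContDiff ℝ 1 v) :
    Continuous (Lden κ u v) := by
  have := continuous_pd hu; have := continuous_pd hv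
  unfold Lden; fun_prop

theorem continuous_Aden (hu : ContDiff ℝ 1 u) (hv : ContDiff ℝ 1 v) (i : Fin 5) :
    Continuous fun x => Aden u v x i := by
  have := hu.continuous; have := hv.continuous
  have := continuous_pd hu i; have := continuous_pd hv i
  unfold Aden; fun_prop

theorem continuous_morawetzDensity (hu : ContDiff ℝ 1 u) (hv : ContDiff ℝ 1 v) :
    Continuous (uncurry (morawetzDensity κ u v)) := by
  have := continuous_Lden κ hu hv; have := continuous_Nden κ hu.continuous hv.continuous
  have := continuous_Aden hu hv
  unfold morawetzDensity; simp_rw [Bden_eq_mul_Aden]; fun_prop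

end Continuity

theorem integral_integral_morawetzDensity_gal (κ : ℝ) (ξ : E5) {u v : E5 → ℂ}
    (hu : ContDiff ℝ 1 u) (hv : ContDiff ℝ 1 v) {w : E5 → ℝ} (hw : Continuous w)
    (hwc : HasCompactSupport w) :
    ∫ x, ∫ y, morawetzDensity κ (gal κ ξ u) (gal 1 ξ v) x y * w x * w y
      = ∫ x, ∫ y, morawetzDensity κ u v x y * w x * w y := by
  set P : E5 → ℝ := fun x => ∑ i, ξ i * Aden u v x i
  set N := Nden κ u v
  set G : E5 → E5 → ℝ := fun x y => κ * (P x * N y - P y * N x) * w x * w y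
  have hP : Continuous P := by
    have := continuous_Aden hu hv; fun_prop
  have hN : Continuous N := continuous_Nden κ hu.continuous hv.continuous
  have hG : Integrable (uncurry G) (volume.prod volume) :=
    Continuous.integrable_mul_fst_mul_snd (F := fun p => κ * (P p.1 * N p.2 - P p.2 * N p.1))
      (by fun_prop) hw hwc
  have hG_zero : ∫ x, ∫ y, G x y = 0 :=
    integral_integral_eq_zero_of_antisymm hG fun x y => by ring
  calc ∫ x, ∫ y, morawetzDensity κ (gal κ ξ u) (gal 1 ξ v) x y * w x * w y
      = ∫ x, ∫ y, morawetzDensity κ u v x y * w x * w y + G x y := by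
        simp_rw [morawetzDensity_gal κ ξ (hu.differentiable one_ne_zero)
          (hv.differentiable one_ne_zero), add_mul]
        rfl
    _ = (∫ x, ∫ y, morawetzDensity κ u v x y * w x * w y) + ∫ x, ∫ y, G x y :=
        integral_integral_add ((continuous_morawetzDensity κ hu hv).integrable_mul_fst_mul_snd
          hw hwc) hG
    _ = ∫ x, ∫ y, morawetzDensity κ u v x y * w x * w y := by rw [hG_zero, add_zero]

theorem galilean_invariance_morawetz_general (κ : ℝ) (ξ : E5)
    (u v : SchwartzMap E5 ℂ) (w : E5 → ℝ) (hw : Continuous w)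
    (hwc : HasCompactSupport w) :
    (∫ x : E5, ∫ y : E5,
        (Lden κ (gal κ ξ u) (gal 1 ξ v) x * Nden κ (gal κ ξ u) (gal 1 ξ v) y
          - ∑ i : Fin 5, Aden (gal κ ξ u) (gal 1 ξ v) x i
              * Bden κ (gal κ ξ u) (gal 1 ξ v) y i) * w x * w y)
      = ∫ x : E5, ∫ y : E5,
        (Lden κ u v x * Nden κ u v y
          - ∑ i : Fin 5, Aden u v x i * Bden κ u v y i) * w x * w y :=
  integral_integral_morawetzDensity_gal κ ξ (u.smooth 1) (v.smooth 1) hw hwc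

/-- Galilean invariance of the symmetrized interaction Morawetz integrand. -/
theorem galilean_invariance_morawetz (κ : ℝ) (hκ : 0 < κ) (ξ : E5)
    (u v : SchwartzMap E5 ℂ) (w : E5 → ℝ) (hw : Continuous w)
    (hwb : ∃ C : ℝ, ∀ x, |w x| ≤ C) (hwc : HasCompactSupport w) :
    (∫ x : E5, ∫ y : E5,
        (Lden κ (gal κ ξ u) (gal 1 ξ v) x * Nden κ (gal κ ξ u) (gal 1 ξ v) y
          - ∑ i : Fin 5, Aden (gal κ ξ u) (gal 1 ξ v) x i
              * Bden κ (gal κ ξ u) (gal 1 ξ v) y i) * w x * w y)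
      = ∫ x : E5, ∫ y : E5,
        (Lden κ u v x * Nden κ u v y
          - ∑ i : Fin 5, Aden u v x i * Bden κ u v y i) * w x * w y :=
  galilean_invariance_morawetz_general κ ξ u v w hw hwc
end
end

section
/- Let κ > 0, let u, v ∈ ℂ, and let p, q ∈ ℂ⁵. Then Im(2·conj(u)·p + conj(v)·q) · Im(2κ·conj(u)·p + κ·conj(v)·q) ≤ (2‖p‖² + κ‖q‖²) · (2κ|u|² + |v|²), where the left-hand side is the Euclidean dot product of the two ℝ⁵-vectors of componentwise imaginary parts. -/
open Complex ComplexConjugate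

/-! The second vector is `κ` times the first, `A = 2 ū p + v̄ q`, so the left-hand side is
`κ ∑ (Im Aᵢ)² ≤ κ ∑ (2|u||pᵢ| + |v||qᵢ|)²`; each summand is bounded by Cauchy–Schwarz in the
weighted form `κ (2xa + yb)² + 2 (ay - κbx)² = (2a² + κb²)(2κx² + y²)`. -/

theorem mul_two_mul_add_mul_sq_le (κ x y a b : ℝ) :
    κ * (2 * x * a + y * b) ^ 2 ≤ (2 * a ^ 2 + κ * b ^ 2) * (2 * κ * x ^ 2 + y ^ 2) := by
  linear_combination 2 * sq_nonneg (a * y - κ * b * x)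

theorem norm_two_mul_conj_mul_add_conj_mul_le (u v z w : ℂ) :
    ‖2 * conj u * z + conj v * w‖ ≤ 2 * ‖u‖ * ‖z‖ + ‖v‖ * ‖w‖ :=
  (norm_add_le _ _).trans_eq (by simp)

theorem im_mul_im_ofReal_mul_le {κ : ℝ} (hκ : 0 ≤ κ) (u v z w : ℂ) :
    (2 * conj u * z + conj v * w).im * (2 * (κ : ℂ) * conj u * z + (κ : ℂ) * conj v * w).im
      ≤ (2 * ‖z‖ ^ 2 + κ * ‖w‖ ^ 2) * (2 * κ * ‖u‖ ^ 2 + ‖v‖ ^ 2) := by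
  set A := 2 * conj u * z + conj v * w
  have hκA : (2 * (κ : ℂ) * conj u * z + (κ : ℂ) * conj v * w).im = κ * A.im := by
    rw [← im_ofReal_mul]; congr 1; simp only [A]; ring
  have him : A.im ^ 2 ≤ ‖A‖ ^ 2 := by
    rw [sq, ← normSq_eq_norm_sq]; exact im_sq_le_normSq A
  have hnorm : ‖A‖ ^ 2 ≤ (2 * ‖u‖ * ‖z‖ + ‖v‖ * ‖w‖) ^ 2 :=
    pow_le_pow_left₀ (norm_nonneg A) (norm_two_mul_conj_mul_add_conj_mul_le u v z w) 2
  calc A.im * (2 * (κ : ℂ) * conj u * z + (κ : ℂ) * conj v * w).im = κ * A.im ^ 2 := by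
        rw [hκA]; ring
    _ ≤ κ * (2 * ‖u‖ * ‖z‖ + ‖v‖ * ‖w‖) ^ 2 :=
        mul_le_mul_of_nonneg_left (him.trans hnorm) hκ
    _ ≤ _ := mul_two_mul_add_mul_sq_le κ ‖u‖ ‖v‖ ‖z‖ ‖w‖

theorem sum_im_mul_im_ofReal_mul_le {ι : Type*} [Fintype ι] {κ : ℝ} (hκ : 0 ≤ κ) (u v : ℂ)
    (p q : ι → ℂ) :
    (∑ i, (2 * conj u * p i + conj v * q i).im
        * (2 * (κ : ℂ) * conj u * p i + (κ : ℂ) * conj v * q i).im)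
      ≤ (2 * (∑ i, ‖p i‖ ^ 2) + κ * (∑ i, ‖q i‖ ^ 2)) * (2 * κ * ‖u‖ ^ 2 + ‖v‖ ^ 2) := by
  calc _ ≤ ∑ i, (2 * ‖p i‖ ^ 2 + κ * ‖q i‖ ^ 2) * (2 * κ * ‖u‖ ^ 2 + ‖v‖ ^ 2) :=
        Finset.sum_le_sum fun i _ => im_mul_im_ofReal_mul_le hκ u v (p i) (q i)
    _ = _ := by
        rw [← Finset.sum_mul, Finset.sum_add_distrib, ← Finset.mul_sum, ← Finset.mul_sum]

/-- Nonnegativity of the angular terms in the interaction Morawetz identity: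
the product of the two momentum densities is controlled by the kinetic and
mass densities. -/
theorem momentum_densities_dot_le (κ : ℝ) (hκ : 0 < κ) (u v : ℂ)
    (p q : Fin 5 → ℂ) :
    (∑ i : Fin 5, (2 * conj u * p i + conj v * q i).im
        * (2 * (κ : ℂ) * conj u * p i + (κ : ℂ) * conj v * q i).im)
      ≤ (2 * (∑ i : Fin 5, ‖p i‖ ^ 2) + κ * (∑ i : Fin 5, ‖q i‖ ^ 2))
        * (2 * κ * ‖u‖ ^ 2 + ‖v‖ ^ 2) :=
  sum_im_mul_im_ofReal_mul_le hκ.le u v p q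
end

section
/- Let φ₀ : [0,∞) → ℝ be smooth, define ψ₀(r) = (1/r)∫₀^r φ₀(s) ds for r > 0, and define a : ℝ⁵ → ℝ by a(x) = ∫₀^{|x|} ψ₀(r)·r dr. Then for every x ∈ ℝ⁵ with x ≠ 0, a is twice differentiable at x with second partial derivatives ∂_j∂_k a(x) = δ_{jk}·φ₀(|x|) + (δ_{jk} − x_j x_k/|x|²)·(ψ₀(|x|) − φ₀(|x|)) for 1 ≤ j,k ≤ 5, and consequently Δa(x) = 4ψ₀(|x|) + φ₀(|x|). -/
/-!
Write `a(y) = H(‖y‖)` with `H(t) = ∫₀ᵗ ψ₀(r) r dr`. Since `H'(t) = t ψ₀(t)`, the gradient of `a`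
away from the origin is `ψ₀(‖y‖) y`, and differentiating `ψ₀(‖y‖) y_k` once more gives
`∂_j ∂_k a(x) = ψ₀ δ_jk + ψ₀'(‖x‖) x_j x_k / ‖x‖`. As `r ψ₀(r) = ∫₀ʳ φ₀`, the mean value `ψ₀` satisfies
`ψ₀'(r) = (φ₀(r) - ψ₀(r)) / r`. The Laplacian follows because the projection `P` has trace `5 - 1`.
-/

open MeasureTheory

noncomputable section

open Set Filter Topology

section RadialCalculus

variable {E : Type*} [NormedAddCommGroup E] [InnerProductSpace ℝ E]

theorem hasFDerivAt_norm_of_ne_zero {x : E} (hx : x ≠ 0) :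
    HasFDerivAt (‖·‖) (‖x‖⁻¹ • innerSL ℝ x) x := by
  have hsq : ‖x‖ ^ 2 ≠ 0 := pow_ne_zero 2 (norm_ne_zero_iff.mpr hx)
  have h := (hasStrictFDerivAt_norm_sq x).hasFDerivAt.sqrt hsq
  simp only [Real.sqrt_sq (norm_nonneg _)] at h
  convert h using 1
  ext v
  simp only [smul_apply, coe_innerSL_apply, smul_eq_mul, nsmul_eq_mul, Nat.cast_ofNat]
  field_simp

theorem HasDerivAt.comp_norm {g : ℝ → ℝ} {g' : ℝ} {x : E} (hg : HasDerivAt g g' ‖x‖)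
    (hx : x ≠ 0) : HasFDerivAt (fun y => g ‖y‖) ((g' * ‖x‖⁻¹) • innerSL ℝ x) x := by
  have h := hg.comp_hasFDerivAt x (hasFDerivAt_norm_of_ne_zero hx)
  rwa [smul_smul] at h

variable {g u : ℝ → ℝ}

theorem hasFDerivAt_radial (hg : ∀ t, 0 < t → HasDerivAt g (u t * t) t) {y : E} (hy : y ≠ 0) :
    HasFDerivAt (fun z => g ‖z‖) (u ‖y‖ • innerSL ℝ y) y := by
  have hy' : 0 < ‖y‖ := norm_pos_iff.mpr hy
  convert (hg ‖y‖ hy').comp_norm hy using 2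
  field_simp

theorem hasFDerivAt_fderiv_radial_apply {u' : ℝ} (hg : ∀ t, 0 < t → HasDerivAt g (u t * t) t)
    {x : E} (hu : HasDerivAt u u' ‖x‖) (hx : x ≠ 0) (v : E) :
    HasFDerivAt (fun y => fderiv ℝ (fun z => g ‖z‖) y v)
      (u ‖x‖ • innerSL ℝ v + (inner ℝ v x * (u' * ‖x‖⁻¹)) • innerSL ℝ x) x := by
  have hgrad : (fun y => fderiv ℝ (fun z => g ‖z‖) y v) =ᶠ[𝓝 x]
      fun y => u ‖y‖ * innerSL ℝ v y := by
    filter_upwards [isOpen_compl_singleton.mem_nhds hx] with y hy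
    rw [(hasFDerivAt_radial hg hy).fderiv]
    simp [real_inner_comm]
  rw [← smul_smul]
  exact ((hu.comp_norm hx).mul (innerSL ℝ v).hasFDerivAt).congr_of_eventuallyEq hgrad

end RadialCalculus

theorem ContinuousOn.continuousOn_primitive_Ici {f : ℝ → ℝ} {a : ℝ}
    (hf : ContinuousOn f (Ici a)) : ContinuousOn (fun t => ∫ s in a..t, f s) (Ici a) := by
  intro t ht
  have hIcc : ContinuousOn (fun t => ∫ s in a..t, f s) (Icc a (t + 1)) := by
    have hsub : uIcc a (t + 1) = Icc a (t + 1) := uIcc_of_le (by linarith [mem_Ici.mp ht])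
    rw [← hsub]
    refine intervalIntegral.continuousOn_primitive_interval' ?_ left_mem_uIcc
    exact (hf.mono (hsub ▸ Icc_subset_Ici_self)).intervalIntegrable
  refine (hIcc t ⟨ht, by linarith⟩).mono_of_mem_nhdsWithin ?_
  exact inter_mem_nhdsWithin _ (Iic_mem_nhds (by linarith))

theorem ContinuousOn.hasDerivAt_primitive_of_lt {f : ℝ → ℝ} {a t : ℝ}
    (hf : ContinuousOn f (Ici a)) (ht : a < t) :
    HasDerivAt (fun t => ∫ s in a..t, f s) (f t) t := by
  have hsub : uIcc a t ⊆ Ici a := by rw [uIcc_of_le ht.le]; exact Icc_subset_Ici_self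
  exact intervalIntegral.integral_hasDerivAt_right ((hf.mono hsub).intervalIntegrable)
    ((hf.mono Ioi_subset_Ici_self).stronglyMeasurableAtFilter isOpen_Ioi t ht)
    (hf.continuousAt (Ici_mem_nhds ht))

theorem ContinuousOn.hasDerivAt_inv_mul_primitive {f : ℝ → ℝ} (hf : ContinuousOn f (Ici 0))
    {t : ℝ} (ht : 0 < t) :
    HasDerivAt (fun s => s⁻¹ * ∫ r in 0..s, f r) ((f t - t⁻¹ * ∫ r in 0..t, f r) / t) t := by
  refine ((hasDerivAt_inv ht.ne').fun_mul (hf.hasDerivAt_primitive_of_lt ht)).congr_deriv ?_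
  field_simp
  ring

section MeanValue

variable {φ ψ : ℝ → ℝ} (hφ : ContinuousOn φ (Ici 0))
  (hψ : ∀ r : ℝ, 0 < r → ψ r = (1 / r) * ∫ s in (0 : ℝ)..r, φ s)
include hφ hψ

theorem hasDerivAt_of_eq_inv_mul_primitive {t : ℝ} (ht : 0 < t) :
    HasDerivAt ψ ((φ t - ψ t) / t) t := by
  have hψ_eq : ∀ᶠ r in 𝓝 t, ψ r = r⁻¹ * ∫ s in (0 : ℝ)..r, φ s := by
    filter_upwards [Ioi_mem_nhds ht] with r hr using (hψ r hr).trans (by rw [one_div])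
  rw [hψ_eq.self_of_nhds]
  exact (hφ.hasDerivAt_inv_mul_primitive ht).congr_of_eventuallyEq hψ_eq

theorem hasDerivAt_primitive_mul_self_of_eq_inv_mul_primitive (t : ℝ) (ht : 0 < t) :
    HasDerivAt (fun t => ∫ r in (0 : ℝ)..t, ψ r * r) (ψ t * t) t := by
  have hweight : EqOn (fun r => ψ r * r) (fun r => ∫ s in (0 : ℝ)..r, φ s) (Ici 0) := by
    intro r hr
    rcases (mem_Ici.mp hr).eq_or_lt with rfl | hr
    · simp
    · simp only [hψ r hr]
      field_simp
  exact (hφ.continuousOn_primitive_Ici.congr hweight).hasDerivAt_primitive_of_lt ht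

end MeanValue

theorem EuclideanSpace.sum_one_sub_mul_self_div_norm_sq {n : ℕ} {x : EuclideanSpace ℝ (Fin n)}
    (hx : x ≠ 0) : ∑ j, (1 - x j * x j / ‖x‖ ^ 2) = (n : ℝ) - 1 := by
  have hsq : ‖x‖ ^ 2 ≠ 0 := pow_ne_zero 2 (norm_ne_zero_iff.mpr hx)
  rw [Finset.sum_sub_distrib, ← Finset.sum_div]
  simp only [← sq, ← EuclideanSpace.real_norm_sq_eq, div_self hsq]
  simp

/-- Hessian of the radial Morawetz weight `a(x) = ∫₀^{|x|} ψ₀(r) r dr`,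
where `ψ₀(r) = (1/r)∫₀^r φ₀(s) ds`. -/
theorem radial_weight_hessian (φ₀ : ℝ → ℝ)
    (hφ : ContDiffOn ℝ (⊤ : ℕ∞) φ₀ (Set.Ici 0))
    (ψ₀ : ℝ → ℝ) (hψ : ∀ r : ℝ, 0 < r → ψ₀ r = (1 / r) * ∫ s in (0 : ℝ)..r, φ₀ s)
    (a : E5 → ℝ) (ha : ∀ x : E5, a x = ∫ r in (0 : ℝ)..‖x‖, ψ₀ r * r)
    (x : E5) (hx : x ≠ 0) :
    DifferentiableAt ℝ a x ∧
    (∀ k : Fin 5, DifferentiableAt ℝ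
      (fun y => fderiv ℝ a y (EuclideanSpace.single k 1)) x) ∧
    (∀ j k : Fin 5,
      fderiv ℝ (fun y => fderiv ℝ a y (EuclideanSpace.single k 1)) x
          (EuclideanSpace.single j 1)
        = (if j = k then (1 : ℝ) else 0) * φ₀ ‖x‖
          + ((if j = k then (1 : ℝ) else 0) - x j * x k / ‖x‖ ^ 2)
            * (ψ₀ ‖x‖ - φ₀ ‖x‖)) ∧
    (∑ j : Fin 5,
        fderiv ℝ (fun y => fderiv ℝ a y (EuclideanSpace.single j 1)) x
          (EuclideanSpace.single j 1)
      = 4 * ψ₀ ‖x‖ + φ₀ ‖x‖) := by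
  have hφc : ContinuousOn φ₀ (Ici 0) := hφ.continuousOn
  have hψ' := hasDerivAt_of_eq_inv_mul_primitive hφc hψ (norm_pos_iff.mpr hx)
  have hprofile := hasDerivAt_primitive_mul_self_of_eq_inv_mul_primitive hφc hψ
  obtain rfl : a = fun y => ∫ r in (0 : ℝ)..‖y‖, ψ₀ r * r := funext ha
  have hhess := fun k : Fin 5 =>
    hasFDerivAt_fderiv_radial_apply hprofile hψ' hx (EuclideanSpace.single k 1)
  have hentry : ∀ j k : Fin 5,
      fderiv ℝ (fun y => fderiv ℝ (fun z => ∫ r in (0 : ℝ)..‖z‖, ψ₀ r * r) y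
          (EuclideanSpace.single k 1)) x (EuclideanSpace.single j 1)
        = (if j = k then (1 : ℝ) else 0) * φ₀ ‖x‖
          + ((if j = k then (1 : ℝ) else 0) - x j * x k / ‖x‖ ^ 2) * (ψ₀ ‖x‖ - φ₀ ‖x‖) := by
    intro j k
    rw [(hhess k).fderiv]
    simp only [add_apply, smul_apply, coe_innerSL_apply, EuclideanSpace.inner_single_left,
      EuclideanSpace.inner_single_right, Real.ringHom_apply, PiLp.single_apply,
      MonoidWithZeroHom.map_ite_one_zero, one_mul, mul_ite, mul_one, mul_zero, smul_eq_mul,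
      ite_mul, zero_mul, eq_comm]
    split_ifs <;> field_simp <;> ring
  refine ⟨(hasFDerivAt_radial hprofile hx).differentiableAt,
    fun k => (hhess k).differentiableAt, hentry, ?_⟩
  simp only [hentry, if_true, one_mul]
  rw [Finset.sum_add_distrib, ← Finset.sum_mul,
    EuclideanSpace.sum_one_sub_mul_self_div_norm_sq hx]
  simp only [Finset.sum_const, Finset.card_univ, Fintype.card_fin, nsmul_eq_mul]
  ring
end
end
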